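/- arXiv:math/0011210 — 2 statements merged into one kernel-verified Lean document; each statement's English description precedes it below -/
import Mathlib

section
/- Let V be a finite-dimensional complex vector space, N : V → V a linear endomorphism, g : V → V a linear automorphism, and q a real number with q > 1. If g ∘ N ∘ g⁻¹ = q • N, then N is nilpotent. -/
open Polynomial Module

theorem weil_deligne_monodromy_nilpotent
    (V : Type*) [AddCommGroup V] [Module ℂ V] [FiniteDimensional ℂ V]
    (N : V →ₗ[ℂ] V) (g : V ≃ₗ[ℂ] V) (q : ℝ) (hq : 1 < q)
    (h : g.toLinearMap ∘ₗ N ∘ₗ g.symm.toLinearMap = (q : ℂ) • N) :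
    IsNilpotent N := by
  have hq0 : (q : ℂ) ≠ 0 := by
    exact_mod_cast ne_of_gt (lt_trans zero_lt_one hq)
  -- g ∘ N = q • N ∘ g
  have key : ∀ v : V, g (N v) = (q : ℂ) • N (g v) := by
    intro v
    have := congrArg (fun f : V →ₗ[ℂ] V => f (g v)) h
    simpa using this
  -- eigenvalue μ gives eigenvalue μ / q
  have step : ∀ μ : ℂ, Module.End.HasEigenvalue N μ →
      Module.End.HasEigenvalue N (μ / q) := by
    intro μ hμ
    obtain ⟨v, hv⟩ := hμ.exists_hasEigenvector
    refine Module.End.hasEigenvalue_of_hasEigenvector (x := g v) ⟨?_, by simpa using hv.2⟩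
    rw [Module.End.mem_eigenspace_iff]
    have h1 : g (N v) = (q : ℂ) • N (g v) := key v
    rw [hv.apply_eq_smul] at h1
    rw [map_smul] at h1
    have h2 : N (g v) = (q : ℂ)⁻¹ • (μ • g v) := by
      rw [h1, smul_smul, inv_mul_cancel₀ hq0, one_smul]
    rw [h2, smul_smul, div_eq_inv_mul]
  -- all eigenvalues are zero
  have hzero : ∀ μ : ℂ, Module.End.HasEigenvalue N μ → μ = 0 := by
    intro μ hμ
    by_contra hμ0
    have hall : ∀ k : ℕ, Module.End.HasEigenvalue N (μ / (q : ℂ) ^ k) := by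
      intro k
      induction k with
      | zero => simpa using hμ
      | succ n ih =>
        have := step _ ih
        rwa [div_div, ← pow_succ] at this
    have hinj : Function.Injective (fun k : ℕ => μ / (q : ℂ) ^ k) := by
      intro a b hab
      simp only [div_eq_div_iff (pow_ne_zero _ hq0) (pow_ne_zero _ hq0)] at hab
      have : (q : ℂ) ^ b = (q : ℂ) ^ a := mul_left_cancel₀ hμ0 hab
      have hr : q ^ b = q ^ a := by exact_mod_cast this
      exact (pow_right_injective₀ (lt_trans zero_lt_one hq) (ne_of_gt hq) hr).symm
    exact Set.infinite_of_injective_forall_mem hinj hall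
      (Module.End.finite_hasEigenvalue (N : Module.End ℂ V))
  -- minpoly is a power of X
  set p := minpoly ℂ (N : Module.End ℂ V) with hp
  have hpmonic : p.Monic := minpoly.monic (Algebra.IsIntegral.isIntegral _)
  have hroots : ∀ x ∈ p.roots, x = 0 := by
    intro x hx
    exact hzero x (Module.End.hasEigenvalue_of_isRoot (isRoot_of_mem_roots hx))
  have hsplit : p.Splits := IsAlgClosed.splits p
  have hcard : p.roots.card = p.natDegree := by
    have := Polynomial.Splits.natDegree_eq_card_roots hsplit
    simpa using this.symm
  have hpeq : p = X ^ p.natDegree := by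
    have heq := Polynomial.Splits.eq_prod_roots_of_monic hsplit hpmonic
    have h2 : Multiset.map (fun a => X - C a) p.roots
        = Multiset.replicate p.roots.card (X : ℂ[X]) := by
      rw [← Multiset.map_const']
      exact Multiset.map_congr rfl fun x hx => by rw [hroots x hx]; simp
    conv_lhs => rw [heq, h2, Multiset.prod_replicate, hcard]
  refine ⟨p.natDegree, ?_⟩
  have haev := minpoly.aeval ℂ (N : Module.End ℂ V)
  rw [← hp, hpeq] at haev
  simpa using haev
end

section
/- Let G be a group, V a nonzero finite-dimensional complex vector space, r : G → GL(V) an irreducible representation (V has no nonzero proper G-invariant subspaces), g₀ ∈ G, q > 1 real, and N : V → V linear with r(γ) ∘ N = c(γ) • (N ∘ r(γ)) for all γ (where c : G → ℝ_{>0}) and c(g₀) = q. Suppose moreover r(g₀) ∘ N ∘ r(g₀)⁻¹ = q • N. Then N = 0. -/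
theorem irreducible_weil_deligne_N_eq_zero
    (G V : Type*) [Group G] [AddCommGroup V] [Module ℂ V]
    [FiniteDimensional ℂ V] [Nontrivial V]
    (r : G →* (V ≃ₗ[ℂ] V))
    (hirr : ∀ W : Submodule ℂ V, (∀ γ : G, ∀ v ∈ W, r γ v ∈ W) → W = ⊥ ∨ W = ⊤)
    (g₀ : G) (q : ℝ) (hq : 1 < q) (c : G → ℝ) (hc : ∀ γ, 0 < c γ)
    (N : V →ₗ[ℂ] V)
    (hcomm : ∀ γ : G, (r γ).toLinearMap ∘ₗ N = ((c γ : ℂ)) • (N ∘ₗ (r γ).toLinearMap))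
    (hg₀ : c g₀ = q)
    (hconj : (r g₀).toLinearMap ∘ₗ N ∘ₗ (r g₀).symm.toLinearMap = (q : ℂ) • N) :
    N = 0 := by
  -- determinant of N vanishes
  have hdet : LinearMap.det N = 0 := by
    have hu : LinearMap.det ((r g₀).toLinearMap) * LinearMap.det ((r g₀).symm.toLinearMap)
        = 1 := by
      rw [← LinearMap.det_comp]
      have : (r g₀).toLinearMap ∘ₗ (r g₀).symm.toLinearMap = LinearMap.id := by
        ext v; simp
      rw [this, LinearMap.det_id]
    have h1 : LinearMap.det ((r g₀).toLinearMap ∘ₗ N ∘ₗ (r g₀).symm.toLinearMap)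
        = LinearMap.det N := by
      rw [LinearMap.det_comp, LinearMap.det_comp,
        show LinearMap.det (r g₀).toLinearMap *
          (LinearMap.det N * LinearMap.det (r g₀).symm.toLinearMap)
          = LinearMap.det N * (LinearMap.det (r g₀).toLinearMap *
            LinearMap.det (r g₀).symm.toLinearMap) by ring, hu, mul_one]
    rw [hconj, LinearMap.det_smul] at h1
    set n := Module.finrank ℂ V
    have hn : 0 < n := Module.finrank_pos
    have hqn : ((q : ℂ)) ^ n ≠ 1 := by
      intro h
      have : (q : ℝ) ^ n = 1 := by exact_mod_cast h
      have := one_lt_pow₀ hq hn.ne'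
      linarith
    by_contra hN0
    exact hqn (mul_right_cancel₀ hN0 (h1.trans (one_mul _).symm))
  -- kernel of N is invariant
  have hker : ∀ γ : G, ∀ v ∈ LinearMap.ker N, r γ v ∈ LinearMap.ker N := by
    intro γ v hv
    rw [LinearMap.mem_ker] at hv ⊢
    have := congrArg (fun f => f v) (hcomm γ)
    simp only [LinearMap.comp_apply, LinearMap.smul_apply, hv, map_zero,
      LinearEquiv.coe_coe] at this
    have hcne : ((c γ : ℂ)) ≠ 0 := by
      exact_mod_cast (hc γ).ne'
    rcases smul_eq_zero.mp this.symm with h | h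
    · exact absurd h hcne
    · exact h
  rcases hirr (LinearMap.ker N) hker with h | h
  · exfalso
    have := LinearMap.bot_lt_ker_of_det_eq_zero hdet
    rw [h] at this
    exact lt_irrefl _ this
  · exact LinearMap.ker_eq_top.mp h
end
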